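/- Let H be a graph with two parallel edges e, f, and let 𝔠 be a partition of E(H) into matchings such that the union of any two of them is a connected edge set. Then {e} and {f} are both singleton classes of 𝔠, every edge of H is incident with both e and f, and every other class of 𝔠 has at most two edges. -/

import Mathlib

/-!
Since `e` and `f` are parallel, an edge of the class `M ∋ e` or of the class `N ∋ f` that is
incident with `e` or `f` must be `e` or `f` itself, so the connected set `M ∪ N` cannot grow beyond
`{e, f}`: thus `M = {e}` and `N = {f}`. For any other class `P`, connectivity of `{e} ∪ P` forces
every edge of `P` to be incident with `e`, because two edges of the matching `P` never touch.
Finally, a matching whose edges all meet `e` picks at most one edge through each end of `e`.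
-/

/-- A multigraph (possibly with parallel edges, but loopless). -/
structure Multigraph (V E : Type*) where
  ends : E → Sym2 V
  not_isDiag : ∀ e, ¬ (ends e).IsDiag

namespace Multigraph

variable {V E : Type*} (G : Multigraph V E)

/-- A matching: a set of pairwise non-incident edges. -/
def Matching (M : Set E) : Prop :=
  ∀ e ∈ M, ∀ f ∈ M, e ≠ f → ¬ ∃ v : V, v ∈ G.ends e ∧ v ∈ G.ends f

/-- An edge set `F` is connected if it is nonempty and any two of its edges are
linked by a chain of edges of `F`, consecutive ones sharing an endpoint. -/
def EdgesConnected (F : Set E) : Prop :=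
  F.Nonempty ∧ ∀ e ∈ F, ∀ f ∈ F,
    Relation.ReflTransGen
      (fun a b => a ∈ F ∧ b ∈ F ∧ ∃ v : V, v ∈ G.ends a ∧ v ∈ G.ends b) e f

end Multigraph

namespace Multigraph

variable {V E : Type*} (G : Multigraph V E)

def Incident (a b : E) : Prop :=
  ∃ v : V, v ∈ G.ends a ∧ v ∈ G.ends b

variable {G}

theorem incident_self (a : E) : G.Incident a a :=
  ⟨(G.ends a).out.1, Sym2.out_fst_mem _, Sym2.out_fst_mem _⟩

theorem Incident.symm {a b : E} (h : G.Incident a b) : G.Incident b a :=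
  let ⟨v, ha, hb⟩ := h
  ⟨v, hb, ha⟩

theorem Incident.of_ends_eq_right {a b c : E} (h : G.Incident a b) (hbc : G.ends b = G.ends c) :
    G.Incident a c :=
  let ⟨v, ha, hb⟩ := h
  ⟨v, ha, hbc ▸ hb⟩

theorem Matching.eq_of_incident {M : Set E} (hM : G.Matching M) {a b : E} (ha : a ∈ M)
    (hb : b ∈ M) (hab : G.Incident a b) : a = b := by
  by_contra hne
  exact hM a ha b hb hne hab

theorem Matching.notMem_of_ends_eq {M : Set E} (hM : G.Matching M) {e f : E} (he : e ∈ M)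
    (hef : e ≠ f) (hpar : G.ends e = G.ends f) : f ∉ M :=
  fun hf => hef (hM.eq_of_incident he hf ((incident_self e).of_ends_eq_right hpar))

theorem EdgesConnected.subset_of_incident_closed {F S : Set E} (hF : G.EdgesConnected F)
    {a : E} (haF : a ∈ F) (haS : a ∈ S)
    (hS : ∀ x ∈ F, x ∈ S → ∀ y ∈ F, G.Incident x y → y ∈ S) : F ⊆ S := by
  intro y hy
  induction hF.2 a haF y hy with
  | refl => exact haS
  | tail _ hstep ih =>
    obtain ⟨hbF, hcF, hbc⟩ := hstep
    exact hS _ hbF (ih hbF) _ hcF hbc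

theorem eq_singleton_of_ends_eq {M N : Set E} (hM : G.Matching M) (hN : G.Matching N)
    {e f : E} (he : e ∈ M) (hf : f ∈ N) (hpar : G.ends e = G.ends f)
    (hconn : G.EdgesConnected (M ∪ N)) : M = {e} := by
  have hsub : M ∪ N ⊆ {x | G.ends x = G.ends e} := by
    refine hconn.subset_of_incident_closed (Or.inl he) rfl ?_
    rintro x - hx y (hyM | hyN) hxy
    · exact congrArg G.ends (hM.eq_of_incident hyM he (hxy.symm.of_ends_eq_right hx))
    · have hyf := hN.eq_of_incident hyN hf (hxy.symm.of_ends_eq_right (hx.trans hpar))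
      exact (congrArg G.ends hyf).trans hpar.symm
  refine Set.eq_singleton_iff_unique_mem.mpr ⟨he, fun x hx => ?_⟩
  exact hM.eq_of_incident hx he ((incident_self x).of_ends_eq_right (hsub (Or.inl hx)))

theorem incident_of_edgesConnected_singleton_union {P : Set E} (hP : G.Matching P) {e : E}
    (hconn : G.EdgesConnected ({e} ∪ P)) {g : E} (hg : g ∈ P) : G.Incident g e := by
  have hsub : {e} ∪ P ⊆ {x | G.Incident x e} := by
    refine hconn.subset_of_incident_closed (Or.inl rfl) (incident_self e) ?_
    rintro x (rfl | hxP) hxe y (rfl | hyP) hxy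
    · exact hxe
    · exact hxy.symm
    · exact incident_self y
    · exact hP.eq_of_incident hxP hyP hxy ▸ hxe
  exact hsub (Or.inr hg)

theorem Matching.ncard_le_two_of_forall_incident {Q : Set E} (hQ : G.Matching Q) {e : E}
    (hQe : ∀ x ∈ Q, G.Incident x e) : Q.ncard ≤ 2 := by
  classical
  obtain ⟨⟨v, w⟩, hvw⟩ := Quot.exists_rep (G.ends e)
  have hends : ∀ x ∈ Q, v ∈ G.ends x ∨ w ∈ G.ends x := by
    intro x hx
    obtain ⟨u, hux, hue⟩ := hQe x hx
    rw [← hvw] at hue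
    rcases Sym2.mem_iff.mp hue with rfl | rfl
    exacts [Or.inl hux, Or.inr hux]
  have hinj : Set.InjOn (fun x => decide (v ∈ G.ends x)) Q := by
    intro a ha b hb hab
    have hab' : v ∈ G.ends a ↔ v ∈ G.ends b := by simpa using hab
    refine hQ.eq_of_incident ha hb ?_
    by_cases hva : v ∈ G.ends a
    · exact ⟨v, hva, hab'.mp hva⟩
    · exact ⟨w, (hends a ha).resolve_left hva, (hends b hb).resolve_left (hab'.not.mp hva)⟩
  simpa using Set.ncard_le_ncard_of_injOn _ (fun _ _ => Set.mem_univ _) hinj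

end Multigraph

theorem parallel_edges_structure_general {V E : Type*}
    (G : Multigraph V E) (𝔠 : Set (Set E))
    (hcov : ⋃₀ 𝔠 = Set.univ)
    (hmatch : ∀ M ∈ 𝔠, G.Matching M)
    (hconn : ∀ M ∈ 𝔠, ∀ N ∈ 𝔠, M ≠ N → G.EdgesConnected (M ∪ N))
    (e f : E) (hef : e ≠ f) (hpar : G.ends e = G.ends f) :
    ({e} : Set E) ∈ 𝔠 ∧ ({f} : Set E) ∈ 𝔠 ∧
    (∀ g : E, (∃ v : V, v ∈ G.ends g ∧ v ∈ G.ends e) ∧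
      (∃ v : V, v ∈ G.ends g ∧ v ∈ G.ends f)) ∧
    (∀ M ∈ 𝔠, M ≠ ({e} : Set E) → M ≠ ({f} : Set E) → M.ncard ≤ 2) := by
  have hclass : ∀ g : E, ∃ M ∈ 𝔠, g ∈ M := fun g => Set.mem_sUnion.mp (hcov ▸ Set.mem_univ g)
  obtain ⟨M, hM, heM⟩ := hclass e
  obtain ⟨N, hN, hfN⟩ := hclass f
  have hMN : M ≠ N := fun h => (hmatch M hM).notMem_of_ends_eq heM hef hpar (h ▸ hfN)
  have hMe : M = {e} := Multigraph.eq_singleton_of_ends_eq (hmatch M hM) (hmatch N hN) heM hfN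
    hpar (hconn M hM N hN hMN)
  have hNf : N = {f} := Multigraph.eq_singleton_of_ends_eq (hmatch N hN) (hmatch M hM) hfN heM
    hpar.symm (Set.union_comm M N ▸ hconn M hM N hN hMN)
  have hincident : ∀ g : E, G.Incident g e := by
    intro g
    obtain ⟨P, hP, hgP⟩ := hclass g
    by_cases hPe : P = {e}
    · obtain rfl : g = e := by simpa [hPe] using hgP
      exact Multigraph.incident_self g
    · exact Multigraph.incident_of_edgesConnected_singleton_union (hmatch P hP)
        (hconn {e} (hMe ▸ hM) P hP (Ne.symm hPe)) hgP
  refine ⟨hMe ▸ hM, hNf ▸ hN, fun g => ⟨hincident g, (hincident g).of_ends_eq_right hpar⟩, ?_⟩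
  exact fun Q hQ _ _ => (hmatch Q hQ).ncard_le_two_of_forall_incident fun x _ => hincident x

/-- If a graph has two parallel edges `e, f` and its edge set is partitioned into
matchings whose pairwise unions are connected, then `{e}` and `{f}` are singleton
classes, every edge is incident with both `e` and `f`, and every other class has
at most two edges. -/
theorem parallel_edges_structure {V E : Type*} [Fintype V] [Fintype E]
    (G : Multigraph V E) (𝔠 : Set (Set E))
    (hne : ∀ M ∈ 𝔠, M.Nonempty) (hcov : ⋃₀ 𝔠 = Set.univ)
    (hdisj : ∀ M ∈ 𝔠, ∀ N ∈ 𝔠, M ≠ N → Disjoint M N)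
    (hmatch : ∀ M ∈ 𝔠, G.Matching M)
    (hconn : ∀ M ∈ 𝔠, ∀ N ∈ 𝔠, M ≠ N → G.EdgesConnected (M ∪ N))
    (e f : E) (hef : e ≠ f) (hpar : G.ends e = G.ends f) :
    ({e} : Set E) ∈ 𝔠 ∧ ({f} : Set E) ∈ 𝔠 ∧
    (∀ g : E, (∃ v : V, v ∈ G.ends g ∧ v ∈ G.ends e) ∧
      (∃ v : V, v ∈ G.ends g ∧ v ∈ G.ends f)) ∧
    (∀ M ∈ 𝔠, M ≠ ({e} : Set E) → M ≠ ({f} : Set E) → M.ncard ≤ 2) :=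
  parallel_edges_structure_general G 𝔠 hcov hmatch hconn e f hef hpar
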